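/- Let c > 0 and let (s_i) be a sequence in [0,1] with s := liminf_{j→∞} (1/n_j)∑_{i≤j} s_i·i² < 1, where n_j = ∑_{i<j} i². Then there exist a nonincreasing sequence ε_i → 0 with ε_0 = 1 and each ε_{i+1} ∈ {ε_i, ε_i/2}, and a constant b, such that for all j: ∑_{i≤j} M(s_i, ε_i)·i² − c·j² > s·n_j − b, where M(x,ε) = H(min(1/2, H⁻¹(x)+ε)). -/
import Mathlib


open Filter Finset

/-- The binary entropy function (base-2 logarithms). -/
noncomputable def binH (p : ℝ) : ℝ := -(p * Real.logb 2 p + (1 - p) * Real.logb 2 (1 - p))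

/-- `nseq j = ∑_{i<j} i²`, the chunk boundaries. -/
def nseq (j : ℕ) : ℕ := ∑ i ∈ Finset.range j, i ^ 2

lemma binH_eq (p : ℝ) : binH p = Real.binEntropy p / Real.log 2 := by
  simp only [binH, Real.logb, Real.binEntropy, Real.log_inv]; ring

lemma binH_half : binH (1/2) = 1 := by
  rw [binH_eq, show (1/2:ℝ) = 2⁻¹ by norm_num, Real.binEntropy_two_inv,
    div_self (Real.log_ne_zero_of_pos_of_ne_one (by norm_num) (by norm_num))]

lemma binH_concave {t a : ℝ} (ht : t ∈ Set.Icc (0:ℝ) 1) (ha : a ∈ Set.Icc (0:ℝ) 1) :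
    a + (1-a) * binH t ≤ binH (a * (1/2) + (1-a) * t) := by
  have hlog : (0:ℝ) < Real.log 2 := Real.log_pos (by norm_num)
  have h := Real.strictConcave_binEntropy.concaveOn.2
    (show (1/2:ℝ) ∈ Set.Icc (0:ℝ) 1 by norm_num) ht
    (show (0:ℝ) ≤ a from ha.1) (show (0:ℝ) ≤ 1 - a by linarith [ha.2])
    (show a + (1 - a) = 1 by ring)
  simp only [smul_eq_mul] at h
  rw [show (1/2:ℝ) = 2⁻¹ by norm_num] at h ⊢
  rw [Real.binEntropy_two_inv] at h
  rw [binH_eq, binH_eq, le_div_iff₀ hlog]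
  have hx : (a + (1-a) * (Real.binEntropy t / Real.log 2)) * Real.log 2
      = a * Real.log 2 + (1-a) * Real.binEntropy t := by field_simp
  linarith [hx, h]

lemma lemA (g : ℝ → ℝ)
    (hg_right : ∀ x ∈ Set.Icc (0:ℝ) 1, binH (g x) = x ∧ g x ∈ Set.Icc (0:ℝ) (1/2))
    {x e : ℝ} (hx : x ∈ Set.Icc (0:ℝ) 1) (he : 0 < e) :
    x + min 1 (2*e) * (1 - x) ≤ binH (min (1/2) (g x + e)) := by
  obtain ⟨hbx, hgx⟩ := hg_right x hx
  set t := g x with htdef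
  have ht1 : t ∈ Set.Icc (0:ℝ) 1 := ⟨hgx.1, le_trans hgx.2 (by norm_num)⟩
  by_cases h : (1:ℝ)/2 ≤ t + e
  · rw [min_eq_left h, binH_half]
    have h1 : min 1 (2*e) ≤ 1 := min_le_left _ _
    nlinarith [hx.1, hx.2, h1]
  · push_neg at h
    have hden : 0 < 1/2 - t := by linarith
    set a := e / (1/2 - t) with hadef
    have ha0 : 0 < a := div_pos he hden
    have ha1 : a ≤ 1 := by rw [div_le_one hden]; linarith
    have hmul : a * (1/2 - t) = e := div_mul_cancel₀ e hden.ne'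
    have hsum : a * (1/2) + (1-a) * t = t + e := by linear_combination hmul
    have hmin : min (1/2) (t + e) = t + e := min_eq_right h.le
    have hc := binH_concave ht1 ⟨ha0.le, ha1⟩
    rw [hsum, hbx] at hc
    rw [hmin]
    have h2e : min 1 (2*e) ≤ a := by
      have : 2*e ≤ a := by rw [hadef, le_div_iff₀ hden]; nlinarith [hgx.1]
      exact le_trans (min_le_right _ _) this
    nlinarith [hx.1, hx.2, h2e, hc]

lemma nseq_formula (j : ℕ) : 6 * (nseq j : ℝ) = j * (j-1) * (2*j-1) := by
  induction j with
  | zero => simp [nseq]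
  | succ j ih =>
    have : nseq (j+1) = nseq j + j^2 := by rw [nseq, nseq, Finset.sum_range_succ]
    rw [this]
    push_cast
    push_cast at ih
    linear_combination ih

lemma nseq_cast_sum (j : ℕ) : (nseq j : ℝ) = ∑ i ∈ Finset.range j, (i:ℝ)^2 := by
  rw [nseq]; push_cast; ring

lemma nseq_mono : Monotone (fun j => (nseq j : ℝ)) := by
  intro a b hab
  simp only [nseq_cast_sum]
  exact Finset.sum_le_sum_of_subset_of_nonneg (Finset.range_subset_range.2 hab)
    (fun i _ _ => sq_nonneg _)

lemma nseq_pos {j : ℕ} (hj : 2 ≤ j) : (0:ℝ) < nseq j := by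
  rw [nseq_cast_sum]
  have h1 : (1:ℕ) ∈ Finset.range j := Finset.mem_range.2 (by omega)
  have := Finset.single_le_sum (s := Finset.range j) (f := fun i : ℕ => (i:ℝ)^2) (fun i _ => sq_nonneg _) h1
  norm_num at this
  linarith

theorem stmt18 (g : ℝ → ℝ)
    (hg_left : ∀ p ∈ Set.Icc (0:ℝ) (1/2), g (binH p) = p)
    (hg_right : ∀ x ∈ Set.Icc (0:ℝ) 1, binH (g x) = x ∧ g x ∈ Set.Icc (0:ℝ) (1/2))
    (c : ℝ) (hc : 0 < c)
    (s : ℕ → ℝ) (hs : ∀ i, s i ∈ Set.Icc (0:ℝ) 1)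
    (S : ℝ)
    (hS : S = Filter.liminf
        (fun j => (1 / (nseq j : ℝ)) *
          ∑ i ∈ Finset.range (j + 1), s i * (i : ℝ) ^ 2) Filter.atTop)
    (hS1 : S < 1) :
    ∃ ε : ℕ → ℝ, ε 0 = 1 ∧
      (∀ i, ε (i + 1) = ε i ∨ ε (i + 1) = ε i / 2) ∧
      Filter.Tendsto ε Filter.atTop (nhds 0) ∧
      ∃ b : ℝ, ∀ j : ℕ,
        S * (nseq j : ℝ) - b <
          (∑ i ∈ Finset.range (j + 1),
              binH (min (1/2) (g (s i) + ε i)) * (i : ℝ) ^ 2) - c * (j : ℝ) ^ 2 := by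
  have h1S : (0:ℝ) < 1 - S := by linarith
  have hq0 : ∀ j : ℕ, (0:ℝ) ≤ (1 / (nseq j : ℝ)) * ∑ i ∈ Finset.range (j+1), s i * (i:ℝ)^2 := by
    intro j
    apply mul_nonneg (by positivity)
    exact Finset.sum_nonneg fun i _ => mul_nonneg (hs i).1 (sq_nonneg _)
  have hlb : ∀ δ : ℝ, 0 < δ → ∃ N : ℕ, ∀ j : ℕ, N ≤ j →
      (S - δ) * (nseq j:ℝ) ≤ ∑ i ∈ Finset.range (j+1), s i * (i:ℝ)^2 := by
    intro δ hδ
    have hlt : S - δ < Filter.liminf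
        (fun j => (1 / (nseq j : ℝ)) *
          ∑ i ∈ Finset.range (j + 1), s i * (i : ℝ) ^ 2) Filter.atTop := by
      rw [← hS]; linarith
    have h1 := eventually_lt_of_lt_liminf hlt
      (Filter.isBoundedUnder_of ⟨0, fun j => hq0 j⟩)
    obtain ⟨N, hN⟩ := Filter.eventually_atTop.mp (h1.and (Filter.eventually_ge_atTop 2))
    refine ⟨N, fun j hj => ?_⟩
    obtain ⟨h2, h3⟩ := hN j hj
    have hp := nseq_pos h3
    calc (S - δ) * (nseq j:ℝ)
        ≤ ((1 / (nseq j:ℝ)) * ∑ i ∈ Finset.range (j+1), s i * (i:ℝ)^2) * nseq j :=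
          mul_le_mul_of_nonneg_right h2.le hp.le
      _ = ∑ i ∈ Finset.range (j+1), s i * (i:ℝ)^2 := by field_simp
  have hcj : ∀ δ : ℝ, 0 < δ → ∃ N : ℕ, ∀ j : ℕ, N ≤ j → c * (j:ℝ)^2 ≤ δ * (nseq j:ℝ) := by
    intro δ hδ
    obtain ⟨K, hK⟩ := exists_nat_ge (12*c/δ)
    refine ⟨max 2 K, fun j hj => ?_⟩
    have hj2 : (2:ℝ) ≤ (j:ℝ) := by
      have : (2:ℕ) ≤ j := le_trans (le_max_left _ _) hj
      exact_mod_cast this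
    have hjK : (12*c/δ) ≤ (j:ℝ) := le_trans hK (by
      have : K ≤ j := le_trans (le_max_right _ _) hj
      exact_mod_cast this)
    have h12 : 12*c ≤ δ * j := by rw [div_le_iff₀ hδ] at hjK; linarith
    have hf := nseq_formula j
    have hfac : (0:ℝ) ≤ ((j:ℝ)-1)*(2*(j:ℝ)-1) := by nlinarith
    have hA := mul_le_mul_of_nonneg_right h12 hfac
    have hB : 6*(c*(j:ℝ)^2) ≤ 12*c*(((j:ℝ)-1)*(2*(j:ℝ)-1)) := by
      nlinarith [hc.le, mul_nonneg hc.le (sq_nonneg ((j:ℝ)-2)),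
        mul_le_mul_of_nonneg_left hj2 hc.le]
    nlinarith [hA, hB, hf, hδ.le]
  have hd : ∀ k : ℕ, (0:ℝ) < min 1 (2*(1/2:ℝ)^k) := fun k => lt_min one_pos (by positivity)
  have hδk : ∀ k : ℕ, (0:ℝ) < min 1 (2*(1/2:ℝ)^k) * (1-S) / 2 := fun k => by
    have := hd k; positivity
  have hE : ∀ k : ℕ, ∃ N : ℕ, ∀ j : ℕ, N ≤ j →
      ((S - min 1 (2*(1/2:ℝ)^k) * (1-S)/2) * (nseq j:ℝ) ≤
          ∑ i ∈ Finset.range (j+1), s i * (i:ℝ)^2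
        ∧ c*(j:ℝ)^2 ≤ (min 1 (2*(1/2:ℝ)^k) * (1-S)/2) * (nseq j:ℝ)) := by
    intro k
    obtain ⟨N1, h1⟩ := hlb _ (hδk k)
    obtain ⟨N2, h2⟩ := hcj _ (hδk k)
    exact ⟨max N1 N2, fun j hj =>
      ⟨h1 j (le_trans (le_max_left _ _) hj), h2 j (le_trans (le_max_right _ _) hj)⟩⟩
  choose N hN using hE
  set m : ℕ → ℕ := fun k => Nat.rec 0 (fun k ih => max (ih+1) (N (k+1))) k with hm
  have hm0 : m 0 = 0 := rfl
  have hmsucc : ∀ k, m (k+1) = max (m k + 1) (N (k+1)) := fun k => rfl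
  have hmlt : ∀ k, m k < m (k+1) := fun k => by
    rw [hmsucc]; exact lt_of_lt_of_le (Nat.lt_succ_self _) (le_max_left _ _)
  have hmmono : StrictMono m := strictMono_nat_of_lt_succ hmlt
  have hmk : ∀ k, k ≤ m k := by
    intro k
    induction k with
    | zero => exact Nat.zero_le _
    | succ k ih => exact Nat.succ_le_of_lt (lt_of_le_of_lt ih (hmlt k))
  have hNm : ∀ k, N (k+1) ≤ m (k+1) := fun k => by rw [hmsucc]; exact le_max_right _ _
  set L : ℕ → ℕ := fun j => Nat.findGreatest (fun k => m k ≤ j) j with hLdef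
  have hL_le : ∀ j, m (L j) ≤ j := fun j =>
    Nat.findGreatest_spec (P := fun k => m k ≤ j) (Nat.zero_le j)
      (show (fun k => m k ≤ j) 0 from Nat.zero_le j)
  have hL_lt : ∀ j, j < m (L j + 1) := by
    intro j
    by_cases h : L j + 1 ≤ j
    · by_contra hcon; push_neg at hcon
      exact Nat.findGreatest_is_greatest (Nat.lt_succ_self _) h hcon
    · push_neg at h
      calc j < L j + 1 := h
        _ ≤ m (L j + 1) := hmk _
  have hLj_le : ∀ j, L j ≤ j := fun j => Nat.findGreatest_le j
  have hL_mono : Monotone L := fun a b hab =>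
    Nat.le_findGreatest (le_trans (hLj_le a) hab) (le_trans (hL_le a) hab)
  have hL_step : ∀ j, L (j+1) ≤ L j + 1 := by
    intro j
    by_contra hcon; push_neg at hcon
    have h1 : m (L (j+1)) ≤ j + 1 := hL_le (j+1)
    have h2 : m (L j + 1) < m (L (j+1)) := hmmono hcon
    have h3 := hL_lt j
    omega
  have hL_ge : ∀ K j : ℕ, m K ≤ j → K ≤ L j := fun K j hj =>
    Nat.le_findGreatest (le_trans (hmk K) hj) hj
  have e0 : (1/2:ℝ)^(L 0) = 1 := by
    have hL0 : L 0 = 0 := Nat.findGreatest_zero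
    rw [hL0, pow_zero]
  have estep : ∀ i, (1/2:ℝ)^(L (i+1)) = (1/2:ℝ)^(L i) ∨
      (1/2:ℝ)^(L (i+1)) = (1/2:ℝ)^(L i) / 2 := by
    intro i
    have h1 : L i ≤ L (i+1) := hL_mono (by omega)
    have h2 := hL_step i
    have : L (i+1) = L i ∨ L (i+1) = L i + 1 := by omega
    rcases this with h | h
    · left; rw [h]
    · right; rw [h, pow_succ]; ring
  have etend : Filter.Tendsto (fun i => (1/2:ℝ)^(L i)) Filter.atTop (nhds 0) := by
    have hLtop : Filter.Tendsto L Filter.atTop Filter.atTop :=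
      Filter.tendsto_atTop_atTop.mpr (fun K => ⟨m K, fun j hj => hL_ge K j hj⟩)
    exact (tendsto_pow_atTop_nhds_zero_of_lt_one (by norm_num) (by norm_num)).comp hLtop
  have hmain : ∀ j : ℕ, m 1 ≤ j → S * (nseq j:ℝ) + c * (j:ℝ)^2 ≤
      ∑ i ∈ Finset.range (j+1), binH (min (1/2) (g (s i) + (1/2:ℝ)^(L i))) * (i:ℝ)^2 := by
    intro j hj
    have hk1 : 1 ≤ L j := hL_ge 1 j hj
    have hNle : N (L j) ≤ m (L j) := by
      obtain ⟨k', hk'⟩ := Nat.exists_eq_succ_of_ne_zero (by omega : L j ≠ 0)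
      rw [hk']; exact hNm k'
    obtain ⟨hA1, hA2⟩ := hN (L j) j (le_trans hNle (hL_le j))
    set dk := min 1 (2*(1/2:ℝ)^(L j)) with hdk
    set δ := dk * (1-S)/2 with hδ
    have hdk1 : dk ≤ 1 := min_le_left _ _
    have hdk0 : 0 < dk := hd _
    have hδ0 : 0 < δ := by rw [hδ]; positivity
    have step1 : ∑ i ∈ Finset.range (j+1), (s i + dk * (1 - s i)) * (i:ℝ)^2 ≤
        ∑ i ∈ Finset.range (j+1), binH (min (1/2) (g (s i) + (1/2:ℝ)^(L i))) * (i:ℝ)^2 := by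
      apply Finset.sum_le_sum
      intro i hi
      apply mul_le_mul_of_nonneg_right _ (sq_nonneg _)
      have hεi : (1/2:ℝ)^(L j) ≤ (1/2:ℝ)^(L i) :=
        pow_le_pow_of_le_one (by norm_num) (by norm_num)
          (hL_mono (Nat.lt_succ_iff.mp (Finset.mem_range.mp hi)))
      have hh1 : dk ≤ min 1 (2*(1/2:ℝ)^(L i)) := by
        rw [hdk]; exact min_le_min le_rfl (by linarith)
      have hh2 := lemA g hg_right (hs i) (show (0:ℝ) < (1/2:ℝ)^(L i) by positivity)
      have hh3 : s i + dk * (1 - s i) ≤ s i + min 1 (2*(1/2:ℝ)^(L i)) * (1 - s i) := by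
        have hsi2 := (hs i).2
        nlinarith [hh1]
      linarith [hh2, hh3]
    have step2 : ∑ i ∈ Finset.range (j+1), (s i + dk * (1 - s i)) * (i:ℝ)^2
        = (1 - dk) * (∑ i ∈ Finset.range (j+1), s i * (i:ℝ)^2) + dk * (nseq (j+1):ℝ) := by
      rw [nseq_cast_sum, Finset.mul_sum, Finset.mul_sum, ← Finset.sum_add_distrib]
      exact Finset.sum_congr rfl fun i _ => by ring
    have hnn : (0:ℝ) ≤ (nseq j:ℝ) := by positivity
    have hmono := nseq_mono (Nat.le_succ j)
    have hh1 : (1-dk) * ((S - δ) * (nseq j:ℝ)) ≤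
        (1-dk) * (∑ i ∈ Finset.range (j+1), s i * (i:ℝ)^2) :=
      mul_le_mul_of_nonneg_left hA1 (by linarith)
    have hh2 : dk * (nseq j:ℝ) ≤ dk * (nseq (j+1):ℝ) :=
      mul_le_mul_of_nonneg_left hmono hdk0.le
    have hid : (S + δ + dk*δ) * (nseq j:ℝ)
        = (1-dk) * ((S - δ) * (nseq j:ℝ)) + dk * (nseq j:ℝ) := by rw [hδ]; ring
    have hid2 : (S + δ + dk*δ) * (nseq j:ℝ)
        = S * (nseq j:ℝ) + δ * (nseq j:ℝ) + dk * (δ * (nseq j:ℝ)) := by ring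
    have h4 : (0:ℝ) ≤ dk * (δ * (nseq j:ℝ)) :=
      mul_nonneg hdk0.le (mul_nonneg hδ0.le hnn)
    calc S * (nseq j:ℝ) + c*(j:ℝ)^2
        ≤ (S + δ + dk*δ) * (nseq j:ℝ) := by rw [hid2]; linarith [hA2, h4]
      _ = (1-dk) * ((S - δ) * (nseq j:ℝ)) + dk * (nseq j:ℝ) := hid
      _ ≤ (1-dk) * (∑ i ∈ Finset.range (j+1), s i * (i:ℝ)^2) + dk * (nseq (j+1):ℝ) := by
          linarith [hh1, hh2]
      _ = ∑ i ∈ Finset.range (j+1), (s i + dk * (1 - s i)) * (i:ℝ)^2 := step2.symm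
      _ ≤ _ := step1
  have hfin : ∃ b : ℝ, ∀ j : ℕ,
      S * (nseq j : ℝ) - b <
        (∑ i ∈ Finset.range (j + 1),
            binH (min (1/2) (g (s i) + (1/2:ℝ)^(L i))) * (i : ℝ) ^ 2) - c * (j : ℝ) ^ 2 := by
    set b := 1 + ∑ j ∈ Finset.range (m 1),
        |S * (nseq j:ℝ) - ((∑ i ∈ Finset.range (j+1),
          binH (min (1/2) (g (s i) + (1/2:ℝ)^(L i))) * (i:ℝ)^2) - c * (j:ℝ)^2)| with hb
    have hsum0 : (0:ℝ) ≤ ∑ j ∈ Finset.range (m 1),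
        |S * (nseq j:ℝ) - ((∑ i ∈ Finset.range (j+1),
          binH (min (1/2) (g (s i) + (1/2:ℝ)^(L i))) * (i:ℝ)^2) - c * (j:ℝ)^2)| :=
      Finset.sum_nonneg fun j _ => abs_nonneg _
    refine ⟨b, fun j => ?_⟩
    by_cases hj : m 1 ≤ j
    · have h := hmain j hj
      have hbpos : 0 < b := by rw [hb]; linarith
      linarith
    · push_neg at hj
      have hmem : j ∈ Finset.range (m 1) := Finset.mem_range.2 hj
      have h1 := Finset.single_le_sum (s := Finset.range (m 1))
        (f := fun j => |S * (nseq j:ℝ) - ((∑ i ∈ Finset.range (j+1),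
          binH (min (1/2) (g (s i) + (1/2:ℝ)^(L i))) * (i:ℝ)^2) - c * (j:ℝ)^2)|)
        (fun j _ => abs_nonneg _) hmem
      have h2 := le_abs_self (S * (nseq j:ℝ) - ((∑ i ∈ Finset.range (j+1),
          binH (min (1/2) (g (s i) + (1/2:ℝ)^(L i))) * (i:ℝ)^2) - c * (j:ℝ)^2))
      rw [hb]
      linarith [h1, h2]
  exact ⟨fun i => (1/2:ℝ)^(L i), e0, estep, etend, hfin⟩
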